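/- arXiv:math/0110233 — 2 statements merged into one kernel-verified Lean document; each statement's English description precedes it below -/
import Mathlib

section
/- Let X be a finite group, let i be an involution in X, and for x ∈ X with z = i · i^x of odd order define ζ₁(x) = z^((o(z)+1)/2) · x⁻¹, where o(z) is the order of z. Then for every c ∈ C_X(i) and every x ∈ X with i · i^x of odd order, the element i · i^(cx) also has odd order and ζ₁(cx) = ζ₁(x) · c⁻¹. -/
/-- For `z = i * i ^ x` of odd order, `ζ₁ x = z ^ ((o(z) + 1) / 2) * x⁻¹`. -/
noncomputable def zetaOne {X : Type*} [Group X] (i x : X) : X :=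
  (i * (x⁻¹ * i * x)) ^ ((orderOf (i * (x⁻¹ * i * x)) + 1) / 2) * x⁻¹

/-! Conjugating `i` by `c * x` is conjugating first by `c`, which fixes `i`, then by `x`;
so `i * i ^ (c * x) = i * i ^ x`, and the only change in `ζ₁` is the trailing factor
`(c * x)⁻¹ = x⁻¹ * c⁻¹`. -/

theorem conj_mul_left_of_commute {G : Type*} [Group G] {c i : G} (hc : Commute c i) (x : G) :
    (c * x)⁻¹ * i * (c * x) = x⁻¹ * i * x := by
  rw [mul_inv_rev, mul_assoc, ← mul_assoc i, ← hc.eq]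
  group

theorem zetaOne_mul_left_of_commute {G : Type*} [Group G] {c i : G} (hc : Commute c i)
    (x : G) : zetaOne i (c * x) = zetaOne i x * c⁻¹ := by
  rw [zetaOne, zetaOne, conj_mul_left_of_commute hc, mul_inv_rev, ← mul_assoc]

theorem zetaOne_equivariant_general {X : Type*} [Group X] (i : X)
    (c x : X) (hc : c ∈ Subgroup.centralizer {i})
    (hx : Odd (orderOf (i * (x⁻¹ * i * x)))) :
    Odd (orderOf (i * ((c * x)⁻¹ * i * (c * x)))) ∧
    zetaOne i (c * x) = zetaOne i x * c⁻¹ := by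
  have hci : Commute c i := Subgroup.mem_centralizer_singleton_iff.mp hc
  exact ⟨conj_mul_left_of_commute hci x ▸ hx, zetaOne_mul_left_of_commute hci x⟩

/-- For an involution `i` in a finite group `X`, if `c` centralises `i` and
`i * i ^ x` has odd order, then `i * i ^ (c * x)` also has odd order and
`ζ₁ (c * x) = ζ₁ x * c⁻¹`. -/
theorem zetaOne_equivariant {X : Type*} [Group X] [Finite X] (i : X)
    (hi : orderOf i = 2) (c x : X) (hc : c ∈ Subgroup.centralizer {i})
    (hx : Odd (orderOf (i * (x⁻¹ * i * x)))) :
    Odd (orderOf (i * ((c * x)⁻¹ * i * (c * x)))) ∧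
    zetaOne i (c * x) = zetaOne i x * c⁻¹ :=
  zetaOne_equivariant_general i c x hc hx
end

section
/- Let X be a finite group, let i be an involution in X, let Ω = {x ∈ X : i · i^x has odd order}, and for x ∈ Ω define ζ₁(x) = z^((o(z)+1)/2) · x⁻¹ where z = i · i^x. Then ζ₁ maps Ω onto the centralizer C_X(i), and all its fibers have the same cardinality: for all a, b ∈ C_X(i), the number of x ∈ Ω with ζ₁(x) = a equals the number of x ∈ Ω with ζ₁(x) = b. (Hence, if x is uniformly distributed on X, then conditionally on x ∈ Ω the element ζ₁(x) is uniformly distributed on C_X(i).) -/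
lemma pow_orderOf_add_one_div_two_sq {M : Type*} [Monoid M] {z : M} (hz : Odd (orderOf z)) :
    (z ^ ((orderOf z + 1) / 2)) ^ 2 = z := by
  obtain ⟨k, hk⟩ := hz
  rw [← pow_mul, show (orderOf z + 1) / 2 * 2 = orderOf z + 1 by omega, pow_succ,
    pow_orderOf_eq_one, one_mul]

section Involution

variable {G : Type*} [Group G] {i : G}

lemma mul_pow_mul_eq_inv_of_mul_mul_eq_inv (hi : i * i = 1) {z : G} (hz : i * z * i = z⁻¹)
    (n : ℕ) : i * z ^ n * i = (z ^ n)⁻¹ := by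
  have h := conj_pow (i := n) (a := i) (b := z)
  rw [inv_eq_of_mul_eq_one_right hi, hz, inv_pow] at h
  exact h.symm

lemma mul_mul_conj_mul_eq_inv (hi : i * i = 1) (x : G) :
    i * (i * (x⁻¹ * i * x)) * i = (i * (x⁻¹ * i * x))⁻¹ := by
  simp only [mul_inv_rev, inv_inv, inv_eq_of_mul_eq_one_right hi, ← mul_assoc, hi, one_mul]

theorem zetaOne_mem_centralizer (hi : i * i = 1) {x : G}
    (hx : Odd (orderOf (i * (x⁻¹ * i * x)))) : zetaOne i x ∈ Subgroup.centralizer {i} := by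
  set z := i * (x⁻¹ * i * x) with hz
  set w := z ^ ((orderOf z + 1) / 2)
  have hw : i * w * i = w⁻¹ :=
    mul_pow_mul_eq_inv_of_mul_mul_eq_inv hi (mul_mul_conj_mul_eq_inv hi x) _
  have hsq : w * w = z := by rw [← sq]; exact pow_orderOf_add_one_div_two_sq hx
  rw [Subgroup.mem_centralizer_singleton_iff]
  calc w * x⁻¹ * i = w⁻¹ * (w * w) * x⁻¹ * i := by group
    _ = w⁻¹ * (i * x⁻¹ * (i * i)) := by rw [hsq, hz]; group
    _ = i * w * i * (i * x⁻¹) := by rw [hi, mul_one, hw]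
    _ = i * (w * x⁻¹) := by rw [mul_assoc _ i, ← mul_assoc i i, hi]; group

variable {c : G}

lemma mul_conj_eq_one_of_mem_centralizer (hi : i * i = 1) (hc : c ∈ Subgroup.centralizer {i}) :
    i * (c⁻¹ * i * c) = 1 := by
  rw [mul_assoc c⁻¹, ← Subgroup.mem_centralizer_singleton_iff.mp hc, inv_mul_cancel_left, hi]

lemma zetaOne_of_mem_centralizer (hi : i * i = 1) (hc : c ∈ Subgroup.centralizer {i}) :
    zetaOne i c = c⁻¹ := by
  simp [zetaOne, mul_conj_eq_one_of_mem_centralizer hi hc]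

lemma mul_conj_mul_of_mem_centralizer (hc : c ∈ Subgroup.centralizer {i}) (x : G) :
    i * ((x * c)⁻¹ * i * (x * c)) = c⁻¹ * (i * (x⁻¹ * i * x)) * c := by
  have hc' : c⁻¹ * i = i * c⁻¹ :=
    Subgroup.mem_centralizer_singleton_iff.mp (inv_mem hc)
  calc i * ((x * c)⁻¹ * i * (x * c)) = i * c⁻¹ * (x⁻¹ * i * x) * c := by group
    _ = c⁻¹ * (i * (x⁻¹ * i * x)) * c := by rw [← hc']; group

lemma orderOf_mul_conj_mul_of_mem_centralizer (hc : c ∈ Subgroup.centralizer {i}) (x : G) :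
    orderOf (i * ((x * c)⁻¹ * i * (x * c))) = orderOf (i * (x⁻¹ * i * x)) := by
  rw [mul_conj_mul_of_mem_centralizer hc]
  simpa using (MulAut.conj c⁻¹).orderOf_eq (i * (x⁻¹ * i * x))

lemma zetaOne_mul_of_mem_centralizer (hc : c ∈ Subgroup.centralizer {i}) (x : G) :
    zetaOne i (x * c) = c⁻¹ * zetaOne i x := by
  have h := conj_pow (i := (orderOf (i * (x⁻¹ * i * x)) + 1) / 2) (a := c⁻¹)
    (b := i * (x⁻¹ * i * x))
  rw [inv_inv] at h
  rw [zetaOne, zetaOne, orderOf_mul_conj_mul_of_mem_centralizer hc,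
    mul_conj_mul_of_mem_centralizer hc, h]
  group

lemma zetaOne_fiber_eq_preimage_mul_right (hc : c ∈ Subgroup.centralizer {i}) (a : G) :
    {x | Odd (orderOf (i * (x⁻¹ * i * x))) ∧ zetaOne i x = a} =
      (· * c) ⁻¹' {x | Odd (orderOf (i * (x⁻¹ * i * x))) ∧ zetaOne i x = c⁻¹ * a} := by
  ext x
  simp only [Set.mem_ofPred_eq, Set.mem_preimage, orderOf_mul_conj_mul_of_mem_centralizer hc,
    zetaOne_mul_of_mem_centralizer hc, mul_right_inj]

end Involution

theorem zetaOne_uniform_general {X : Type*} [Group X] (i : X) (hi : orderOf i = 2) :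
    (∀ x : X, Odd (orderOf (i * (x⁻¹ * i * x))) → zetaOne i x ∈ Subgroup.centralizer {i}) ∧
    (∀ a ∈ Subgroup.centralizer {i},
      ∃ x : X, Odd (orderOf (i * (x⁻¹ * i * x))) ∧ zetaOne i x = a) ∧
    (∀ a ∈ Subgroup.centralizer {i}, ∀ b ∈ Subgroup.centralizer {i},
      {x : X | Odd (orderOf (i * (x⁻¹ * i * x))) ∧ zetaOne i x = a}.ncard =
        {x : X | Odd (orderOf (i * (x⁻¹ * i * x))) ∧ zetaOne i x = b}.ncard) := by
  have hi' : i * i = 1 := by rw [← sq, ← hi, pow_orderOf_eq_one]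
  refine ⟨fun x hx ↦ zetaOne_mem_centralizer hi' hx, fun a ha ↦ ?_, fun a ha b hb ↦ ?_⟩
  · refine ⟨a⁻¹, ?_, by rw [zetaOne_of_mem_centralizer hi' (inv_mem ha), inv_inv]⟩
    rw [mul_conj_eq_one_of_mem_centralizer hi' (inv_mem ha), orderOf_one]
    exact odd_one
  · have hab := mul_mem ha (inv_mem hb)
    rw [zetaOne_fiber_eq_preimage_mul_right hab, mul_inv_rev, inv_inv, inv_mul_cancel_right]
    refine Set.ncard_preimage_of_injective_subset_range (mul_left_injective _) ?_
    rw [(mul_right_surjective _).range_eq]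
    exact Set.subset_univ _

/-- Let `i` be an involution in a finite group `X` and let
`Ω = {x | i * i ^ x has odd order}`.  Then `ζ₁` maps `Ω` onto the centraliser of `i`,
and all fibers of `ζ₁ : Ω → C_X(i)` have the same cardinality; hence for uniformly
distributed `x`, conditionally on `x ∈ Ω`, the element `ζ₁ x` is uniformly
distributed on `C_X(i)`. -/
theorem zetaOne_uniform {X : Type*} [Group X] [Finite X] (i : X) (hi : orderOf i = 2) :
    (∀ x : X, Odd (orderOf (i * (x⁻¹ * i * x))) → zetaOne i x ∈ Subgroup.centralizer {i}) ∧
    (∀ a ∈ Subgroup.centralizer {i},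
      ∃ x : X, Odd (orderOf (i * (x⁻¹ * i * x))) ∧ zetaOne i x = a) ∧
    (∀ a ∈ Subgroup.centralizer {i}, ∀ b ∈ Subgroup.centralizer {i},
      {x : X | Odd (orderOf (i * (x⁻¹ * i * x))) ∧ zetaOne i x = a}.ncard =
        {x : X | Odd (orderOf (i * (x⁻¹ * i * x))) ∧ zetaOne i x = b}.ncard) :=
  zetaOne_uniform_general i hi
end
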